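/- arXiv:2509.19014 — 2 statements merged into one kernel-verified Lean document; each statement's English description precedes it below -/
import Mathlib

section
/- For a smooth positive function ρ : ℝ^d → ℝ, the Bohm identity holds: 2 ρ ∇(Δ√ρ / √ρ) = ∇ · (ρ D²(ln ρ)), where D²(f) denotes the Hessian matrix of f and the divergence is taken row-wise. -/
open MeasureTheory Real

noncomputable section

abbrev E (d : ℕ) : Type := EuclideanSpace ℝ (Fin d)

def pder {d : ℕ} (i : Fin d) (f : E d → ℝ) (x : E d) : ℝ :=
  fderiv ℝ f x (EuclideanSpace.single i 1)

def hess {d : ℕ} (f : E d → ℝ) (x : E d) (i j : Fin d) : ℝ :=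
  iteratedFDeriv ℝ 2 f x ![EuclideanSpace.single i 1, EuclideanSpace.single j 1]

def lap {d : ℕ} (f : E d → ℝ) (x : E d) : ℝ := ∑ i, hess f x i i

def ρm (d : ℕ) (σ : ℝ) (x : E d) : ℝ :=
  (2 * π * σ ^ 2) ^ (-(d : ℝ) / 2) * Real.exp (-‖x‖ ^ 2 / (2 * σ ^ 2))

def μm (d : ℕ) (σ : ℝ) : Measure (E d) :=
  volume.withDensity fun x => ENNReal.ofReal (ρm d σ x)

open scoped ContDiff

section Aux

variable {d : ℕ}

theorem contDiff_pder (i : Fin d) {f : E d → ℝ} (hf : ContDiff ℝ ∞ f) :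
    ContDiff ℝ ∞ (pder i f) := by
  have h1 : ContDiff ℝ ∞ (fderiv ℝ f) := hf.fderiv_right (le_refl _)
  exact (ContinuousLinearMap.apply ℝ ℝ (EuclideanSpace.single i 1)).contDiff.comp h1

theorem diffAt_of_smooth {F : Type*} [NormedAddCommGroup F] [NormedSpace ℝ F]
    {f : E d → F} (hf : ContDiff ℝ ∞ f) (x : E d) :
    DifferentiableAt ℝ f x :=
  (hf.differentiable (by simp)) x

theorem pder_add (i : Fin d) {f g : E d → ℝ} {x : E d} (hf : DifferentiableAt ℝ f x)
    (hg : DifferentiableAt ℝ g x) :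
    pder i (fun y => f y + g y) x = pder i f x + pder i g x := by
  simp only [pder, fderiv_fun_add hf hg]; rfl

theorem pder_sub (i : Fin d) {f g : E d → ℝ} {x : E d} (hf : DifferentiableAt ℝ f x)
    (hg : DifferentiableAt ℝ g x) :
    pder i (fun y => f y - g y) x = pder i f x - pder i g x := by
  simp only [pder, fderiv_fun_sub hf hg]; rfl

theorem pder_mul (i : Fin d) {f g : E d → ℝ} {x : E d} (hf : DifferentiableAt ℝ f x)
    (hg : DifferentiableAt ℝ g x) :
    pder i (fun y => f y * g y) x = pder i f x * g x + f x * pder i g x := by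
  simp only [pder, fderiv_fun_mul hf hg]
  simp [mul_comm]
  ring

theorem pder_const_mul (i : Fin d) {f : E d → ℝ} {x : E d} (hf : DifferentiableAt ℝ f x) (c : ℝ) :
    pder i (fun y => c * f y) x = c * pder i f x := by
  simp only [pder, fderiv_const_mul hf c]; simp

theorem pder_sum (i : Fin d) {g : Fin d → E d → ℝ} {x : E d}
    (hg : ∀ k, DifferentiableAt ℝ (g k) x) :
    pder i (fun y => ∑ k, g k y) x = ∑ k, pder i (g k) x := by
  simp only [pder, fderiv_fun_sum (fun k _ => hg k)]; simp

theorem pder_inv (i : Fin d) {f : E d → ℝ} {x : E d} (hf : DifferentiableAt ℝ f x)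
    (h0 : f x ≠ 0) :
    pder i (fun y => (f y)⁻¹) x = -pder i f x / f x ^ 2 := by
  have h := (hasDerivAt_inv h0).comp_hasFDerivAt x hf.hasFDerivAt
  simp only [Function.comp_def] at h
  rw [pder, h.fderiv]
  simp [pder]
  ring

theorem pder_div (i : Fin d) {f g : E d → ℝ} {x : E d} (hf : DifferentiableAt ℝ f x)
    (hg : DifferentiableAt ℝ g x) (h0 : g x ≠ 0) :
    pder i (fun y => f y / g y) x
      = (pder i f x * g x - f x * pder i g x) / g x ^ 2 := by
  simp only [div_eq_mul_inv]
  rw [pder_mul i (g := fun y => (g y)⁻¹) hf (hg.inv h0), pder_inv i hg h0]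
  field_simp
  ring

theorem pder_sqrt (i : Fin d) {f : E d → ℝ} {x : E d} (hf : DifferentiableAt ℝ f x)
    (h0 : 0 < f x) :
    pder i (fun y => Real.sqrt (f y)) x = pder i f x / (2 * Real.sqrt (f x)) := by
  have h := (Real.hasDerivAt_sqrt h0.ne').comp_hasFDerivAt x hf.hasFDerivAt
  simp only [Function.comp_def] at h
  rw [pder, h.fderiv]
  simp [pder]
  ring

theorem pder_log (i : Fin d) {f : E d → ℝ} {x : E d} (hf : DifferentiableAt ℝ f x)
    (h0 : 0 < f x) :
    pder i (fun y => Real.log (f y)) x = pder i f x / f x := by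
  have h := (Real.hasDerivAt_log h0.ne').comp_hasFDerivAt x hf.hasFDerivAt
  simp only [Function.comp_def] at h
  rw [pder, h.fderiv]
  simp [pder, div_eq_inv_mul]

theorem pder_pder {f : E d → ℝ} (hf : ContDiff ℝ ∞ f) (x : E d) (i j : Fin d) :
    pder i (pder j f) x
      = fderiv ℝ (fderiv ℝ f) x (EuclideanSpace.single i 1) (EuclideanSpace.single j 1) := by
  have hd : DifferentiableAt ℝ (fderiv ℝ f) x :=
    diffAt_of_smooth (hf.fderiv_right (le_refl _)) x
  have he : pder j f = fun y => (fderiv ℝ f y) ((fun _ => EuclideanSpace.single j (1:ℝ)) y) := rfl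
  rw [pder, he, fderiv_clm_apply hd (differentiableAt_const _)]
  simp

theorem hess_eq {f : E d → ℝ} (hf : ContDiff ℝ ∞ f) (x : E d) (i j : Fin d) :
    hess f x i j = pder i (pder j f) x := by
  rw [hess, iteratedFDeriv_two_apply, pder_pder hf]
  simp

theorem pder_comm {f : E d → ℝ} (hf : ContDiff ℝ ∞ f) (x : E d) (i j : Fin d) :
    pder i (pder j f) x = pder j (pder i f) x := by
  rw [pder_pder hf, pder_pder hf]
  exact second_derivative_symmetric
    (fun y => (diffAt_of_smooth hf y).hasFDerivAt)
    (diffAt_of_smooth (hf.fderiv_right (le_refl _)) x).hasFDerivAt _ _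

end Aux

/-- Bohm identity: `2 ρ ∇(Δ√ρ/√ρ) = div(ρ D²(ln ρ))` (row-wise divergence). -/
theorem stmt3 (d : ℕ) (ρ : E d → ℝ) (hρ : ContDiff ℝ (⊤ : ℕ∞) ρ) (hpos : ∀ x, 0 < ρ x) :
    ∀ (x : E d) (i : Fin d),
      2 * ρ x * pder i (fun y => lap (fun z => Real.sqrt (ρ z)) y / Real.sqrt (ρ y)) x
        = ∑ j, pder j (fun y => ρ y * hess (fun z => Real.log (ρ z)) y i j) x := by
  intro x i
  have hρ' : ContDiff ℝ ∞ ρ := hρ.of_le (by simp)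
  have hs : ContDiff ℝ ∞ (fun z => Real.sqrt (ρ z)) := by
    rw [contDiff_iff_contDiffAt]; intro y
    exact (Real.contDiffAt_sqrt (hpos y).ne').comp y hρ'.contDiffAt
  have hl : ContDiff ℝ ∞ (fun z => Real.log (ρ z)) := by
    rw [contDiff_iff_contDiffAt]; intro y
    exact (Real.contDiffAt_log.mpr (hpos y).ne').comp y hρ'.contDiffAt
  have hP : ∀ j : Fin d, ContDiff ℝ ∞ (pder j ρ) := fun j => contDiff_pder j hρ'
  have hPP : ∀ j k : Fin d, ContDiff ℝ ∞ (pder j (pder k ρ)) :=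
    fun j k => contDiff_pder j (hP k)
  have dAt : ∀ {g : E d → ℝ}, ContDiff ℝ ∞ g → ∀ y, DifferentiableAt ℝ g y :=
    fun hg y => diffAt_of_smooth hg y
  have hdiv : ∀ {f g : E d → ℝ} {y : E d}, DifferentiableAt ℝ f y → DifferentiableAt ℝ g y →
      g y ≠ 0 → DifferentiableAt ℝ (fun z => f z / g z) y := by
    intro f g y hf hg h0
    simp only [div_eq_mul_inv]; exact hf.mul (hg.inv h0)
  -- Step A : rewrite the quotient function
  have key : (fun y => lap (fun z => Real.sqrt (ρ z)) y / Real.sqrt (ρ y))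
      = fun y => (∑ k, pder k (pder k ρ) y) / (2 * ρ y)
          - (∑ k, pder k ρ y * pder k ρ y) / (4 * (ρ y * ρ y)) := by
    funext y
    have ha : (0:ℝ) < ρ y := hpos y
    have hsy : (0:ℝ) < Real.sqrt (ρ y) := Real.sqrt_pos.mpr ha
    have hss : Real.sqrt (ρ y) * Real.sqrt (ρ y) = ρ y := Real.mul_self_sqrt ha.le
    have hpders : ∀ k : Fin d, pder k (fun z => Real.sqrt (ρ z))
        = fun z => pder k ρ z / (2 * Real.sqrt (ρ z)) := by
      intro k; funext z
      exact pder_sqrt k (dAt hρ' z) (hpos z)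
    have hterm : ∀ k : Fin d, hess (fun z => Real.sqrt (ρ z)) y k k
        = Real.sqrt (ρ y) * (pder k (pder k ρ) y / (2 * ρ y)
            - pder k ρ y * pder k ρ y / (4 * (ρ y * ρ y))) := by
      intro k
      rw [hess_eq hs, hpders k]
      rw [pder_div k (dAt (hP k) y) (by
          exact ((contDiff_const (c := (2:ℝ))).mul hs).differentiable
            (by simp) y) (by positivity)]
      rw [pder_const_mul k (dAt hs y), pder_sqrt k (dAt hρ' y) ha]
      have h4 : Real.sqrt (ρ y) ^ 4 = ρ y ^ 2 := by
        rw [show Real.sqrt (ρ y) ^ 4 = (Real.sqrt (ρ y) ^ 2) ^ 2 by ring, Real.sq_sqrt ha.le]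
      field_simp
      ring_nf
      simp only [h4, Real.sq_sqrt ha.le]
      ring
    rw [lap, Finset.sum_congr rfl (fun k _ => hterm k), ← Finset.mul_sum,
      mul_comm, mul_div_assoc, div_self hsy.ne', mul_one, Finset.sum_sub_distrib,
      ← Finset.sum_div, ← Finset.sum_div]
  rw [key]
  have ha : (0:ℝ) < ρ x := hpos x
  have hsum1 : ContDiff ℝ ∞ (fun y => ∑ k, pder k (pder k ρ) y) :=
    ContDiff.sum fun k _ => hPP k k
  have hsum2 : ContDiff ℝ ∞ (fun y => ∑ k, pder k ρ y * pder k ρ y) :=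
    ContDiff.sum fun k _ => (hP k).mul (hP k)
  have hden1 : ContDiff ℝ ∞ (fun y => 2 * ρ y) := contDiff_const.mul hρ'
  have hden2 : ContDiff ℝ ∞ (fun y => 4 * (ρ y * ρ y)) := contDiff_const.mul (hρ'.mul hρ')
  -- Step B : compute the left-hand side derivative
  rw [pder_sub i (f := fun y => (∑ k, pder k (pder k ρ) y) / (2 * ρ y))
      (g := fun y => (∑ k, pder k ρ y * pder k ρ y) / (4 * (ρ y * ρ y)))
      (hdiv (dAt hsum1 x) (dAt hden1 x) (by positivity))
      (hdiv (dAt hsum2 x) (dAt hden2 x) (by positivity))]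
  rw [pder_div i (f := fun y => ∑ k, pder k (pder k ρ) y) (g := fun y => 2 * ρ y)
      (dAt hsum1 x) (dAt hden1 x) (by positivity)]
  rw [pder_div i (f := fun y => ∑ k, pder k ρ y * pder k ρ y) (g := fun y => 4 * (ρ y * ρ y))
      (dAt hsum2 x) (dAt hden2 x) (by positivity)]
  have e1 : pder i (fun y => ∑ k, pder k (pder k ρ) y) x
      = ∑ k, pder k (pder i (pder k ρ)) x := by
    rw [pder_sum i (fun k => dAt (hPP k k) x)]
    exact Finset.sum_congr rfl fun k _ => pder_comm (hP k) x i k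
  have e2 : pder i (fun y => ∑ k, pder k ρ y * pder k ρ y) x
      = 2 * ∑ k, pder k (pder i ρ) x * pder k ρ x := by
    rw [pder_sum i (g := fun k y => pder k ρ y * pder k ρ y)
      (fun k => (dAt (hP k) x).mul (dAt (hP k) x)), Finset.mul_sum]
    refine Finset.sum_congr rfl fun k _ => ?_
    rw [pder_mul i (dAt (hP k) x) (dAt (hP k) x), pder_comm hρ' x i k]
    ring
  have e3 : pder i (fun y => 2 * ρ y) x = 2 * pder i ρ x :=
    pder_const_mul i (dAt hρ' x) 2
  have e4 : pder i (fun y => 4 * (ρ y * ρ y)) x = 4 * (2 * (ρ x * pder i ρ x)) := by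
    rw [pder_const_mul i (f := fun y => ρ y * ρ y) ((dAt hρ' x).mul (dAt hρ' x)) 4,
      pder_mul i (dAt hρ' x) (dAt hρ' x)]
    ring
  rw [e1, e2, e3, e4]
  -- Step C : compute the right-hand side
  have hCfun : ∀ j : Fin d, (fun y => ρ y * hess (fun z => Real.log (ρ z)) y i j)
      = fun y => pder i (pder j ρ) y - pder i ρ y * pder j ρ y / ρ y := by
    intro j; funext y
    rw [hess_eq hl]
    have hlog : pder j (fun z => Real.log (ρ z)) = fun z => pder j ρ z / ρ z := by
      funext z; exact pder_log j (dAt hρ' z) (hpos z)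
    rw [hlog, pder_div i (dAt (hP j) y) (dAt hρ' y) (hpos y).ne']
    have hy : ρ y ≠ 0 := (hpos y).ne'
    field_simp
  have hC : ∀ j : Fin d, pder j (fun y => ρ y * hess (fun z => Real.log (ρ z)) y i j) x
      = pder j (pder i (pder j ρ)) x
        - (ρ x * (pder j (pder i ρ) x * pder j ρ x)
          + (ρ x * pder i ρ x) * pder j (pder j ρ) x
          - pder i ρ x * (pder j ρ x * pder j ρ x)) / (ρ x * ρ x) := by
    intro j
    rw [hCfun j]
    rw [pder_sub j (f := pder i (pder j ρ)) (g := fun y => pder i ρ y * pder j ρ y / ρ y)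
      (dAt (hPP i j) x) (hdiv ((dAt (hP i) x).mul (dAt (hP j) x)) (dAt hρ' x) ha.ne')]
    rw [pder_div j (f := fun y => pder i ρ y * pder j ρ y) (g := ρ)
      ((dAt (hP i) x).mul (dAt (hP j) x)) (dAt hρ' x) ha.ne']
    rw [pder_mul j (dAt (hP i) x) (dAt (hP j) x), pder_comm hρ' x j i]
    have hane : ρ x ≠ 0 := ha.ne'
    field_simp
  rw [Finset.sum_congr rfl fun j _ => hC j]
  rw [Finset.sum_sub_distrib, ← Finset.sum_div, Finset.sum_sub_distrib,
    Finset.sum_add_distrib, ← Finset.mul_sum, ← Finset.mul_sum, ← Finset.mul_sum]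
  have hane : ρ x ≠ 0 := ha.ne'
  field_simp
  ring
end
end

section
/- The initial value problem τ'' = a/τ + κ²/τ³ - 2ν τ'/τ², τ(0) = 1, τ'(0) = 0, with a, κ, ν > 0, has a unique global solution τ ∈ C²([0,∞)) with τ(t) > 0 for all t ≥ 0; moreover τ' (t) ≥ 0 and τ is nondecreasing. -/
open Set Filter Real Topology

noncomputable section Stmt18Aux

/-- The vector field of the second-order ODE, as a first-order system on `ℝ × ℝ`. -/
def Fode (a κ ν : ℝ) (p : ℝ × ℝ) : ℝ × ℝ :=
  (p.2, a / p.1 + κ ^ 2 / p.1 ^ 3 - 2 * ν * p.2 / p.1 ^ 2)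
lemma hasDerivAt_fst {f : ℝ → ℝ × ℝ} {d : ℝ × ℝ} {t : ℝ} (h : HasDerivAt f d t) :
    HasDerivAt (fun s => (f s).1) d.1 t := by
  exact (ContinuousLinearMap.fst ℝ ℝ ℝ).hasFDerivAt.comp_hasDerivAt t h

lemma hasDerivAt_snd {f : ℝ → ℝ × ℝ} {d : ℝ × ℝ} {t : ℝ} (h : HasDerivAt f d t) :
    HasDerivAt (fun s => (f s).2) d.2 t := by
  exact (ContinuousLinearMap.snd ℝ ℝ ℝ).hasFDerivAt.comp_hasDerivAt t h

lemma contDiffOn_Fode (a κ ν : ℝ) :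
    ContDiffOn ℝ 1 (Fode a κ ν) {p : ℝ × ℝ | 0 < p.1} := by
  have h1 : ContDiffOn ℝ 1 (fun p : ℝ × ℝ => p.1) {p : ℝ × ℝ | 0 < p.1} :=
    contDiff_fst.contDiffOn
  have h2 : ContDiffOn ℝ 1 (fun p : ℝ × ℝ => p.2) {p : ℝ × ℝ | 0 < p.1} :=
    contDiff_snd.contDiffOn
  refine ContDiffOn.prodMk h2 ?_
  refine ContDiffOn.sub (ContDiffOn.add ?_ ?_) ?_
  · exact contDiffOn_const.div h1 (fun p hp => ne_of_gt hp)
  · exact contDiffOn_const.div (h1.pow 3) (fun p hp => pow_ne_zero _ (ne_of_gt hp))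
  · exact (contDiffOn_const.mul h2).div (h1.pow 2) (fun p hp => pow_ne_zero _ (ne_of_gt hp))

/-- A `C¹` map on an open set is Lipschitz on any compact convex subset. -/
lemma lipschitzOnWith_of_contDiffOn {F : ℝ × ℝ → ℝ × ℝ} {U : Set (ℝ × ℝ)} (hU : IsOpen U)
    (hF : ContDiffOn ℝ 1 F U) {D : Set (ℝ × ℝ)} (hDU : D ⊆ U) (hconv : Convex ℝ D)
    (hcomp : IsCompact D) : ∃ L : NNReal, LipschitzOnWith L F D := by
  rcases D.eq_empty_or_nonempty with h | hne
  · exact ⟨1, by simp [h]⟩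
  have hcont : ContinuousOn (fun p => ‖fderiv ℝ F p‖) U :=
    (hF.continuousOn_fderiv_of_isOpen hU le_rfl).norm
  obtain ⟨p₀, -, hp₀⟩ := hcomp.exists_isMaxOn hne (hcont.mono hDU)
  refine ⟨⟨max (‖fderiv ℝ F p₀‖) 0, le_max_right _ _⟩, ?_⟩
  apply hconv.lipschitzOnWith_of_nnnorm_hasFDerivWithin_le
    (f' := fun p => fderiv ℝ F p) ?_ ?_
  · intro p hp
    exact ((hF.contDiffAt (hU.mem_nhds (hDU hp))).differentiableAt
      one_ne_zero).hasFDerivAt.hasFDerivWithinAt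
  · intro p hp
    have : ‖fderiv ℝ F p‖ ≤ max (‖fderiv ℝ F p₀‖) 0 := le_trans (hp₀ hp) (le_max_left _ _)
    exact this


variable {a κ ν : ℝ}
lemma invariant_core (ha : 0 < a) (hκ : 0 < κ) {T : ℝ} {x : ℝ → ℝ × ℝ}
    (hx0 : x 0 = (1, 0))
    (hode : ∀ t ∈ Icc 0 T, HasDerivAt x (Fode a κ ν (x t)) t)
    (hpos : ∀ t ∈ Icc 0 T, 0 < (x t).1) :
    (∀ t ∈ Icc 0 T, 0 ≤ (x t).2) ∧ MonotoneOn (fun t => (x t).1) (Icc 0 T) := by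
  set w : ℝ → ℝ := fun t => (x t).2 with hw
  have hw0 : w 0 = 0 := by simp [hw, hx0]
  have hwd : ∀ t ∈ Icc 0 T, HasDerivAt w
      (a / (x t).1 + κ ^ 2 / (x t).1 ^ 3 - 2 * ν * (x t).2 / (x t).1 ^ 2) t :=
    fun t ht => hasDerivAt_snd (hode t ht)
  have hwcont : ContinuousOn w (Icc 0 T) :=
    fun t ht => ((hwd t ht).continuousAt).continuousWithinAt
  have key : ∀ t ∈ Icc 0 T, 0 ≤ w t := by
    by_contra h
    push_neg at h
    obtain ⟨t₁, ht₁, ht₁neg⟩ := h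
    have h0t₁ : 0 < t₁ := by
      rcases eq_or_lt_of_le ht₁.1 with h' | h'
      · exfalso; rw [← h'] at ht₁neg; rw [hw0] at ht₁neg; exact lt_irrefl 0 ht₁neg
      · exact h'
    set S := {t | t ∈ Icc 0 t₁ ∧ 0 ≤ w t} with hS
    have hS0 : (0 : ℝ) ∈ S := ⟨⟨le_refl 0, le_of_lt h0t₁⟩, hw0.ge⟩
    have hSbdd : BddAbove S := ⟨t₁, fun u hu => hu.1.2⟩
    have hSclosed : IsClosed S := by
      have hc := (hwcont.mono (Icc_subset_Icc_right ht₁.2)).preimage_isClosed_of_isClosed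
        isClosed_Icc (isClosed_Ici (a := (0:ℝ)))
      have : S = Icc 0 t₁ ∩ w ⁻¹' Ici 0 := by ext u; simp [hS, and_comm]
      rw [this]; exact hc
    set s := sSup S with hs
    have hsS : s ∈ S := hSclosed.csSup_mem ⟨0, hS0⟩ hSbdd
    have hs_mem : s ∈ Icc 0 T := ⟨hsS.1.1, le_trans hsS.1.2 ht₁.2⟩
    have hst₁ : s < t₁ := by
      rcases eq_or_lt_of_le hsS.1.2 with h' | h'
      · exfalso; rw [h'] at hsS; exact absurd hsS.2 (not_le.2 ht₁neg)
      · exact h'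
    have hws : w s = 0 := by
      refine le_antisymm ?_ hsS.2
      have htend : Tendsto w (𝓝[>] s) (𝓝 (w s)) :=
        ((hwd s hs_mem).continuousAt.continuousWithinAt)
      refine le_of_tendsto htend ?_
      filter_upwards [Ioo_mem_nhdsGT_of_mem ⟨le_refl s, hst₁⟩] with u hu
      have huI : u ∈ Icc 0 t₁ := ⟨le_trans hsS.1.1 hu.1.le, hu.2.le⟩
      have hnotS : u ∉ S := fun huS => absurd (le_csSup hSbdd huS) (not_le.2 hu.1)
      have : ¬ 0 ≤ w u := fun h' => hnotS ⟨huI, h'⟩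
      linarith [not_le.mp this]
    have hd := hwd s hs_mem
    have hws2 : (x s).2 = 0 := hws
    rw [hws2] at hd
    have hτs := hpos s hs_mem
    have hdpos : 0 < a / (x s).1 + κ ^ 2 / (x s).1 ^ 3 - 2 * ν * 0 / (x s).1 ^ 2 := by
      have h1 : 2 * ν * 0 / (x s).1 ^ 2 = 0 := by simp
      rw [h1, sub_zero]
      positivity
    have hslope := hasDerivAt_iff_tendsto_slope.mp hd
    have hev : ∀ᶠ u in 𝓝[>] s, 0 < slope w s u := by
      have h1 : ∀ᶠ u in 𝓝[≠] s, 0 < slope w s u := hslope.eventually (lt_mem_nhds hdpos)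
      exact h1.filter_mono (nhdsWithin_mono s (fun u hu => ne_of_gt hu))
    obtain ⟨u, hu1, hu2⟩ := (hev.and (Ioo_mem_nhdsGT_of_mem ⟨le_refl s, hst₁⟩)).exists
    have hus : 0 < u - s := sub_pos.2 hu2.1
    rw [slope_def_field] at hu1
    have hwu : 0 < w u := by
      rcases div_pos_iff.mp hu1 with ⟨h1, _⟩ | ⟨_, h2⟩
      · linarith [hws]
      · linarith
    exact absurd (le_csSup hSbdd ⟨⟨le_trans hsS.1.1 hu2.1.le, hu2.2.le⟩, hwu.le⟩)
      (not_le.2 hu2.1)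
  refine ⟨key, ?_⟩
  apply monotoneOn_of_deriv_nonneg (convex_Icc 0 T)
  · exact fun t ht => (hasDerivAt_fst (hode t ht)).continuousAt.continuousWithinAt
  · intro t ht
    rw [interior_Icc] at ht
    exact (hasDerivAt_fst (hode t (Ioo_subset_Icc_self ht))).differentiableAt.differentiableWithinAt
  · intro t ht
    rw [interior_Icc] at ht
    rw [(hasDerivAt_fst (hode t (Ioo_subset_Icc_self ht))).deriv]
    exact key t (Ioo_subset_Icc_self ht)

lemma invariant (ha : 0 < a) (hκ : 0 < κ) {T : ℝ} {x : ℝ → ℝ × ℝ}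
    (hx0 : x 0 = (1, 0))
    (hode : ∀ t ∈ Icc 0 T, HasDerivAt x (Fode a κ ν (x t)) t) :
    (∀ t ∈ Icc 0 T, 0 < (x t).1) ∧ (∀ t ∈ Icc 0 T, 1 ≤ (x t).1) ∧
    (∀ t ∈ Icc 0 T, 0 ≤ (x t).2) ∧ MonotoneOn (fun t => (x t).1) (Icc 0 T) := by
  have hxcont : ContinuousOn (fun t => (x t).1) (Icc 0 T) :=
    fun t ht => (hasDerivAt_fst (hode t ht)).continuousAt.continuousWithinAt
  have hposall : ∀ t ∈ Icc 0 T, 1 / 2 < (x t).1 := by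
    by_contra h
    push_neg at h
    obtain ⟨t₁, ht₁, hle⟩ := h
    set A := {t | t ∈ Icc 0 T ∧ (x t).1 ≤ 1 / 2} with hA
    have hA1 : t₁ ∈ A := ⟨ht₁, hle⟩
    have hAbdd : BddBelow A := ⟨0, fun u hu => hu.1.1⟩
    have hAclosed : IsClosed A := by
      have hc := hxcont.preimage_isClosed_of_isClosed isClosed_Icc
        (isClosed_Iic (a := (1/2 : ℝ)))
      have : A = Icc 0 T ∩ (fun t => (x t).1) ⁻¹' Iic (1/2) := by
        ext u; simp [hA, and_comm]
      rw [this]; exact hc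
    set s := sInf A with hs
    have hsA : s ∈ A := hAclosed.csInf_mem ⟨t₁, hA1⟩ hAbdd
    have h0s : 0 < s := by
      rcases eq_or_lt_of_le hsA.1.1 with h' | h'
      · exfalso
        have := hsA.2
        rw [← h'] at this
        rw [hx0] at this
        norm_num at this
      · exact h'
    have hlt : ∀ u, 0 ≤ u → u < s → 1 / 2 < (x u).1 := by
      intro u hu0 hus
      by_contra h'
      exact absurd (csInf_le hAbdd ⟨⟨hu0, le_trans hus.le hsA.1.2⟩, not_lt.mp h'⟩)
        (not_le.2 hus)
    have hs_half : 1 / 2 ≤ (x s).1 := by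
      have htend : Tendsto (fun t => (x t).1) (𝓝[<] s) (𝓝 (x s).1) :=
        (hasDerivAt_fst (hode s hsA.1)).continuousAt.continuousWithinAt
      refine ge_of_tendsto htend ?_
      filter_upwards [Ioo_mem_nhdsLT_of_mem ⟨h0s, le_refl s⟩] with u hu
      exact (hlt u hu.1.le hu.2).le
    have hposs : ∀ u ∈ Icc 0 s, 0 < (x u).1 := by
      intro u hu
      rcases lt_or_eq_of_le hu.2 with h' | h'
      · linarith [hlt u hu.1 h']
      · rw [h']; linarith
    have hmono := (invariant_core ha hκ hx0
      (fun t ht => hode t (Icc_subset_Icc_right hsA.1.2 ht)) hposs).2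
    have h1s : (1 : ℝ) ≤ (x s).1 := by
      have := hmono ⟨le_refl 0, h0s.le⟩ ⟨h0s.le, le_refl s⟩ h0s.le
      simpa [hx0] using this
    linarith [hsA.2]
  obtain ⟨hnn, hmono⟩ := invariant_core ha hκ hx0 hode
    (fun t ht => lt_trans (by norm_num) (hposall t ht))
  refine ⟨fun t ht => by linarith [hposall t ht], ?_, hnn, hmono⟩
  intro t ht
  have := hmono ⟨le_refl 0, ht.1.trans ht.2⟩ ht ht.1
  simpa [hx0] using this


lemma growth (ha : 0 < a) (hκ : 0 < κ) (hν : 0 < ν) {T : ℝ} {x : ℝ → ℝ × ℝ}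
    (hx0 : x 0 = (1, 0))
    (hode : ∀ t ∈ Icc 0 T, HasDerivAt x (Fode a κ ν (x t)) t) :
    ∀ t ∈ Icc 0 T,
      (x t).1 ≤ (1 + κ / Real.sqrt (2 * a)) * Real.exp (Real.sqrt (2 * a) * T) ∧
      (x t).2 ≤ κ + Real.sqrt (2 * a) *
        ((1 + κ / Real.sqrt (2 * a)) * Real.exp (Real.sqrt (2 * a) * T)) := by
  obtain ⟨hpos, h1le, hnn, hmono⟩ := invariant ha hκ hx0 hode
  set c : ℝ := Real.sqrt (2 * a) with hcdef
  have hc : 0 < c := Real.sqrt_pos.2 (by linarith)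
  have hc2 : c ^ 2 = 2 * a := Real.sq_sqrt (by linarith)
  set τ : ℝ → ℝ := fun t => (x t).1 with hτdef
  set w : ℝ → ℝ := fun t => (x t).2 with hwdef
  have hτd : ∀ t ∈ Icc 0 T, HasDerivAt τ (w t) t := by
    intro t ht
    have := hasDerivAt_fst (hode t ht)
    simpa [Fode, hτdef, hwdef] using this
  have hwd : ∀ t ∈ Icc 0 T, HasDerivAt w
      (a / τ t + κ ^ 2 / τ t ^ 3 - 2 * ν * w t / τ t ^ 2) t := by
    intro t ht
    have := hasDerivAt_snd (hode t ht)
    simpa [Fode, hτdef, hwdef] using this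
  set E : ℝ → ℝ := fun t => (w t) ^ 2 / 2 - a * Real.log (τ t) + κ ^ 2 / 2 * ((τ t) ^ 2)⁻¹
    with hEdef
  have hEd : ∀ t ∈ Icc 0 T, HasDerivAt E (-(2 * ν * (w t) ^ 2 / (τ t) ^ 2)) t := by
    intro t ht
    have hτpos := hpos t ht
    have hτne : τ t ≠ 0 := ne_of_gt hτpos
    have h1 : HasDerivAt (fun s => (w s) ^ 2 / 2)
        ((2 * w t ^ 1 * (a / τ t + κ ^ 2 / τ t ^ 3 - 2 * ν * w t / τ t ^ 2)) / 2) t :=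
      ((hwd t ht).pow 2).div_const 2
    have h2 : HasDerivAt (fun s => a * Real.log (τ s)) (a * (w t / τ t)) t :=
      ((hτd t ht).log hτne).const_mul a
    have h3 : HasDerivAt (fun s => κ ^ 2 / 2 * ((τ s) ^ 2)⁻¹)
        (κ ^ 2 / 2 * (-(2 * τ t ^ 1 * w t) / ((τ t) ^ 2) ^ 2)) t :=
      (((hτd t ht).pow 2).inv (pow_ne_zero 2 hτne)).const_mul (κ ^ 2 / 2)
    have h4 := (h1.sub h2).add h3
    refine h4.congr_deriv ?_
    field_simp
    ring
  have hEanti : AntitoneOn E (Icc 0 T) := by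
    apply antitoneOn_of_deriv_nonpos (convex_Icc 0 T)
    · exact fun t ht => (hEd t ht).continuousAt.continuousWithinAt
    · intro t ht
      rw [interior_Icc] at ht
      exact (hEd t (Ioo_subset_Icc_self ht)).differentiableAt.differentiableWithinAt
    · intro t ht
      rw [interior_Icc] at ht
      rw [(hEd t (Ioo_subset_Icc_self ht)).deriv]
      have : 0 ≤ 2 * ν * (w t) ^ 2 / (τ t) ^ 2 := by positivity
      linarith
  have hE0 : E 0 = κ ^ 2 / 2 := by
    simp [hEdef, hτdef, hwdef, hx0]
  have hwb : ∀ t ∈ Icc 0 T, w t ≤ κ + c * τ t := by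
    intro t ht
    have h0T : (0 : ℝ) ∈ Icc 0 T := ⟨le_refl 0, ht.1.trans ht.2⟩
    have hEt : E t ≤ κ ^ 2 / 2 := by
      have := hEanti h0T ht ht.1
      rw [hE0] at this
      exact this
    have hτpos := hpos t ht
    have hlog : Real.log (τ t) ≤ τ t := by
      have := Real.log_le_sub_one_of_pos hτpos
      linarith
    have hinv : 0 ≤ κ ^ 2 / 2 * ((τ t) ^ 2)⁻¹ := by positivity
    have hsq : w t ^ 2 ≤ κ ^ 2 + 2 * a * τ t := by
      have : (w t) ^ 2 / 2 - a * Real.log (τ t) + κ ^ 2 / 2 * ((τ t) ^ 2)⁻¹ ≤ κ ^ 2 / 2 := hEt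
      nlinarith [mul_le_mul_of_nonneg_left hlog ha.le]
    have hsq2 : w t ^ 2 ≤ (κ + c * τ t) ^ 2 := by
      nlinarith [h1le t ht, mul_pos hκ (mul_pos hc hτpos), sq_nonneg (τ t - 1),
        mul_pos hc hτpos]
    have h1 := Real.sqrt_le_sqrt hsq2
    rw [Real.sqrt_sq (hnn t ht), Real.sqrt_sq (by nlinarith [mul_pos hc hτpos] : (0:ℝ) ≤ κ + c * τ t)] at h1
    exact h1
  set φ : ℝ → ℝ := fun t => (τ t + κ / c) * Real.exp (-(c * t)) with hφdef
  have hφd : ∀ t ∈ Icc 0 T, HasDerivAt φ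
      (w t * Real.exp (-(c * t)) + (τ t + κ / c) * (Real.exp (-(c * t)) * -c)) t := by
    intro t ht
    have he : HasDerivAt (fun s => Real.exp (-(c * s))) (Real.exp (-(c * t)) * -c) t := by
      have h1 : HasDerivAt (fun s : ℝ => -(c * s)) (-c) t := by
        have := ((hasDerivAt_id t).const_mul c).neg; simp only [mul_one] at this; exact this
      exact h1.exp
    exact ((hτd t ht).add_const (κ / c)).mul he
  have hφanti : AntitoneOn φ (Icc 0 T) := by
    apply antitoneOn_of_deriv_nonpos (convex_Icc 0 T)
    · exact fun t ht => (hφd t ht).continuousAt.continuousWithinAt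
    · intro t ht
      rw [interior_Icc] at ht
      exact (hφd t (Ioo_subset_Icc_self ht)).differentiableAt.differentiableWithinAt
    · intro t ht
      rw [interior_Icc] at ht
      rw [(hφd t (Ioo_subset_Icc_self ht)).deriv]
      have hwbt := hwb t (Ioo_subset_Icc_self ht)
      have hexp : 0 < Real.exp (-(c * t)) := Real.exp_pos _
      have hκc : κ / c * c = κ := div_mul_cancel₀ κ (ne_of_gt hc)
      nlinarith [mul_le_mul_of_nonneg_right hwbt hexp.le]
  intro t ht
  have h0T : (0 : ℝ) ∈ Icc 0 T := ⟨le_refl 0, ht.1.trans ht.2⟩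
  have hφt : φ t ≤ 1 + κ / c := by
    have := hφanti h0T ht ht.1
    simpa [hφdef, hτdef, hx0] using this
  have hexp : 0 < Real.exp (c * t) := Real.exp_pos _
  have hτb : τ t ≤ (1 + κ / c) * Real.exp (c * T) := by
    have h1 : τ t + κ / c ≤ (1 + κ / c) * Real.exp (c * t) := by
      have h2 : (τ t + κ / c) * Real.exp (-(c * t)) ≤ 1 + κ / c := hφt
      rw [Real.exp_neg, ← div_eq_mul_inv] at h2
      exact (div_le_iff₀ hexp).mp h2
    have h3 : Real.exp (c * t) ≤ Real.exp (c * T) :=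
      Real.exp_le_exp.2 (mul_le_mul_of_nonneg_left ht.2 hc.le)
    have h4 : (1 + κ / c) * Real.exp (c * t) ≤ (1 + κ / c) * Real.exp (c * T) := by
      apply mul_le_mul_of_nonneg_left h3
      positivity
    have h5 : 0 ≤ κ / c := by positivity
    linarith
  refine ⟨hτb, ?_⟩
  have := hwb t ht
  nlinarith [mul_le_mul_of_nonneg_left hτb hc.le]


lemma isOpen_posFst : IsOpen {p : ℝ × ℝ | 0 < p.1} :=
  isOpen_lt continuous_const continuous_fst

lemma sol_unique (ha : 0 < a) (hκ : 0 < κ) (hν : 0 < ν) {T : ℝ} {x y : ℝ → ℝ × ℝ}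
    (hx0 : x 0 = (1, 0)) (hy0 : y 0 = (1, 0))
    (hxode : ∀ t ∈ Icc 0 T, HasDerivAt x (Fode a κ ν (x t)) t)
    (hyode : ∀ t ∈ Icc 0 T, HasDerivAt y (Fode a κ ν (y t)) t) :
    EqOn x y (Icc 0 T) := by
  set B : ℝ := (1 + κ / Real.sqrt (2 * a)) * Real.exp (Real.sqrt (2 * a) * T) with hB
  set V : ℝ := κ + Real.sqrt (2 * a) * B with hV
  set K' : Set (ℝ × ℝ) := Icc 1 B ×ˢ Icc 0 V with hK'
  have hKU : K' ⊆ {p : ℝ × ℝ | 0 < p.1} := fun p hp => lt_of_lt_of_le one_pos hp.1.1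
  have hKconv : Convex ℝ K' := (convex_Icc _ _).prod (convex_Icc _ _)
  have hKcomp : IsCompact K' := isCompact_Icc.prod isCompact_Icc
  obtain ⟨L, hL⟩ := lipschitzOnWith_of_contDiffOn isOpen_posFst (contDiffOn_Fode a κ ν)
    hKU hKconv hKcomp
  have hmemx : ∀ t ∈ Icc 0 T, x t ∈ K' := by
    intro t ht
    obtain ⟨-, h1, h2, -⟩ := invariant ha hκ hx0 hxode
    obtain ⟨h3, h4⟩ := growth ha hκ hν hx0 hxode t ht
    exact ⟨⟨h1 t ht, h3⟩, ⟨h2 t ht, h4⟩⟩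
  have hmemy : ∀ t ∈ Icc 0 T, y t ∈ K' := by
    intro t ht
    obtain ⟨-, h1, h2, -⟩ := invariant ha hκ hy0 hyode
    obtain ⟨h3, h4⟩ := growth ha hκ hν hy0 hyode t ht
    exact ⟨⟨h1 t ht, h3⟩, ⟨h2 t ht, h4⟩⟩
  apply ODE_solution_unique_of_mem_Icc_right
    (v := fun _ p => Fode a κ ν p) (s := fun _ => K') (fun _ _ => hL)
  · exact fun t ht => (hxode t ht).continuousAt.continuousWithinAt
  · exact fun t ht => (hxode t (Ico_subset_Icc_self ht)).hasDerivWithinAt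
  · exact fun t ht => hmemx t (Ico_subset_Icc_self ht)
  · exact fun t ht => (hyode t ht).continuousAt.continuousWithinAt
  · exact fun t ht => (hyode t (Ico_subset_Icc_self ht)).hasDerivWithinAt
  · exact fun t ht => hmemy t (Ico_subset_Icc_self ht)
  · rw [hx0, hy0]


lemma uniformPL (a κ ν : ℝ) {Bd V : ℝ} (hB : 1 ≤ Bd) (hV : 0 ≤ V) :
    ∃ r > (0 : ℝ), ∀ (t₀ : ℝ) (p : ℝ × ℝ), p ∈ Icc 1 Bd ×ˢ Icc 0 V →
      ∃ y : ℝ → ℝ × ℝ, y t₀ = p ∧ ∀ t ∈ Icc (t₀ - r) (t₀ + r),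
        HasDerivWithinAt y (Fode a κ ν (y t)) (Icc (t₀ - r) (t₀ + r)) t := by
  set D : Set (ℝ × ℝ) := Icc (1/2 : ℝ) (Bd + 1) ×ˢ Icc (-1 : ℝ) (V + 1) with hD
  have hDU : D ⊆ {p : ℝ × ℝ | 0 < p.1} := fun p hp => lt_of_lt_of_le (by norm_num) hp.1.1
  obtain ⟨L, hL⟩ := lipschitzOnWith_of_contDiffOn isOpen_posFst (contDiffOn_Fode a κ ν)
    hDU ((convex_Icc _ _).prod (convex_Icc _ _)) (isCompact_Icc.prod isCompact_Icc)
  have hDne : D.Nonempty := by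
    refine ⟨(1, 0), ?_⟩
    simp only [hD, mem_prod, mem_Icc]
    norm_num
    constructor <;> linarith
  obtain ⟨p₀, -, hp₀⟩ := (isCompact_Icc.prod isCompact_Icc).exists_isMaxOn hDne
    (((contDiffOn_Fode a κ ν).continuousOn.mono hDU).norm)
  set C : ℝ := max (‖Fode a κ ν p₀‖) 1 with hC
  have hC1 : (1:ℝ) ≤ C := le_max_right _ _
  have hCpos : 0 < C := lt_of_lt_of_le one_pos hC1
  have hCb : ∀ q ∈ D, ‖Fode a κ ν q‖ ≤ C := fun q hq => le_trans (hp₀ hq) (le_max_left _ _)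
  refine ⟨1 / (2 * C), by positivity, ?_⟩
  intro t₀ p hp
  have hball : Metric.closedBall p (1/2) ⊆ D := by
    intro q hq
    have hd : dist q p ≤ 1/2 := Metric.mem_closedBall.mp hq
    have h1 : dist q.1 p.1 ≤ 1/2 := le_trans (le_max_left _ _) (by rwa [← Prod.dist_eq])
    have h2 : dist q.2 p.2 ≤ 1/2 := le_trans (le_max_right _ _) (by rwa [← Prod.dist_eq])
    rw [Real.dist_eq, abs_le] at h1 h2
    simp only [mem_prod, mem_Icc] at hp
    simp only [hD, mem_prod, mem_Icc]
    refine ⟨⟨?_, ?_⟩, ?_, ?_⟩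
    · linarith [h1.1, hp.1.1]
    · linarith [h1.2, hp.1.2]
    · linarith [h2.1, hp.2.1]
    · linarith [h2.2, hp.2.2]
  have hpl : IsPicardLindelof (fun _ : ℝ => Fode a κ ν) (tmin := t₀ - 1/(2*C))
      (tmax := t₀ + 1/(2*C))
      ⟨t₀, by constructor <;> linarith [one_div_pos.2 (by positivity : (0:ℝ) < 2*C)]⟩ p
      (1/2) 0 ⟨C, hCpos.le⟩ L := by
    constructor
    · exact fun t _ => hL.mono hball
    · exact fun q _ => continuousOn_const
    · exact fun t _ q hq => hCb q (hball hq)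
    · have : max (t₀ + 1/(2*C) - t₀) (t₀ - (t₀ - 1/(2*C))) = 1/(2*C) := by
        rw [add_sub_cancel_left, sub_sub_cancel, max_self]
      simp only [NNReal.coe_mk, NNReal.coe_zero, sub_zero]
      rw [this]
      rw [mul_one_div]
      rw [div_le_iff₀ (by positivity)]
      ring_nf
      change C ≤ 1 / 2 * C * 2
      nlinarith
  obtain ⟨y, hy0, hy⟩ := hpl.exists_eq_forall_mem_Icc_hasDerivWithinAt₀
  exact ⟨y, hy0, hy⟩


lemma extend_sol {T r : ℝ} (hT : 0 ≤ T) (hr : 0 < r) {x : ℝ → ℝ × ℝ}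
    (hode : ∀ t ∈ Icc 0 T, HasDerivAt x (Fode a κ ν (x t)) t)
    {y : ℝ → ℝ × ℝ} (hyT : y T = x T)
    (hy : ∀ t ∈ Icc (T - r) (T + r),
      HasDerivWithinAt y (Fode a κ ν (y t)) (Icc (T - r) (T + r)) t) :
    ∃ z : ℝ → ℝ × ℝ, EqOn z x (Iic T) ∧
      ∀ t ∈ Icc 0 (T + r / 2), HasDerivAt z (Fode a κ ν (z t)) t := by
  classical
  set z : ℝ → ℝ × ℝ := fun t => if t ≤ T then x t else y t with hz
  have hzx : EqOn z x (Iic T) := fun t ht => if_pos ht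
  have hzy : EqOn z y (Ici T) := by
    intro t ht
    rcases eq_or_lt_of_le (mem_Ici.mp ht) with h | h
    · subst h
      show (if T ≤ T then x T else y T) = y T
      rw [if_pos le_rfl, hyT]
    · exact if_neg (not_le.2 h)
  refine ⟨z, hzx, ?_⟩
  intro t ht
  rcases lt_trichotomy t T with hlt | heq | hgt
  · have hx' := hode t ⟨ht.1, hlt.le⟩
    have hev : z =ᶠ[𝓝 t] x := eventuallyEq_of_mem (Iic_mem_nhds hlt) hzx
    have hzt : z t = x t := hzx hlt.le
    rw [hzt]
    exact hx'.congr_of_eventuallyEq hev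
  · subst heq
    have h1 : HasDerivWithinAt z (Fode a κ ν (x t)) (Iic t) t :=
      ((hode t ⟨hT, le_refl t⟩).hasDerivWithinAt).congr hzx (hzx self_mem_Iic)
    have h2 : HasDerivWithinAt z (Fode a κ ν (x t)) (Ici t) t := by
      have hyT' := hy t ⟨by linarith, by linarith⟩
      rw [hyT] at hyT'
      have h3 : HasDerivWithinAt y (Fode a κ ν (x t)) (Ici t) t :=
        hyT'.mono_of_mem_nhdsWithin (mem_nhdsWithin_of_mem_nhds
          (Icc_mem_nhds (by linarith) (by linarith)))
      exact h3.congr hzy (hzy self_mem_Ici)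
    have h4 := h1.union h2
    rw [Iic_union_Ici, hasDerivWithinAt_univ] at h4
    have hzT : z t = x t := hzx self_mem_Iic
    rw [hzT]
    exact h4
  · have htmem : t ∈ Icc (T - r) (T + r) := ⟨by linarith [ht.1], by linarith [ht.2]⟩
    have hy' := (hy t htmem).hasDerivAt (Icc_mem_nhds (by linarith) (by linarith [ht.2]))
    have hev : z =ᶠ[𝓝 t] y := eventuallyEq_of_mem (Ici_mem_nhds hgt) hzy
    have hzt : z t = y t := hzy hgt.le
    rw [hzt]
    exact hy'.congr_of_eventuallyEq hev


lemma global_sol (ha : 0 < a) (hκ : 0 < κ) (hν : 0 < ν) :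
    ∃ g : ℝ → ℝ × ℝ, g 0 = (1, 0) ∧
      ∀ t ∈ Ici (0 : ℝ), HasDerivAt g (Fode a κ ν (g t)) t := by
  classical
  have hCD : ContDiffAt ℝ 1 (Fode a κ ν) ((1 : ℝ), (0 : ℝ)) :=
    (contDiffOn_Fode a κ ν).contDiffAt (isOpen_posFst.mem_nhds (by norm_num))
  obtain ⟨y₀, hy₀0, ε, hε, hy₀⟩ := hCD.exists_forall_mem_closedBall_exists_eq_forall_mem_Ioo_hasDerivAt₀ 0
  set Sol : ℝ → (ℝ → ℝ × ℝ) → Prop := fun T x =>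
    x 0 = (1, 0) ∧ (∀ t ∈ Icc 0 T, HasDerivAt x (Fode a κ ν (x t)) t) ∧
      EqOn x y₀ (Ioo (-(ε / 2)) 0) with hSol
  have base : Sol 0 y₀ := by
    refine ⟨hy₀0, ?_, fun u _ => rfl⟩
    intro t ht
    have h0 : t = 0 := le_antisymm ht.2 ht.1
    subst h0
    exact hy₀ 0 ⟨by linarith, by linarith⟩
  have main : ∀ T : ℝ, 0 ≤ T → ∃ x, Sol T x := by
    intro T hT
    set c : ℝ := Real.sqrt (2 * a) with hc'
    have hc : 0 < c := Real.sqrt_pos.2 (by linarith)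
    set Bd : ℝ := (1 + κ / c) * Real.exp (c * T) with hBd
    have hexp1 : 1 ≤ Real.exp (c * T) := Real.one_le_exp (by positivity)
    have hB : 1 ≤ Bd := by
      have h1 : 0 < κ / c := by positivity
      nlinarith
    set V : ℝ := κ + c * Bd with hV
    have hV0 : 0 ≤ V := by positivity
    obtain ⟨r, hr, hPL⟩ := uniformPL a κ ν hB hV0
    have claim : ∀ n : ℕ, ∃ x, Sol (min (n * (r / 2)) T) x := by
      intro n
      induction n with
      | zero =>
        refine ⟨y₀, ?_⟩
        have : min ((0 : ℕ) * (r / 2)) T = 0 := by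
          simp [hT]
        rwa [this]
      | succ n ih =>
        obtain ⟨x, hx⟩ := ih
        set S : ℝ := min (n * (r / 2)) T with hS
        have hS0 : 0 ≤ S := le_min (by positivity) hT
        rcases le_or_gt T (n * (r / 2)) with hcase | hcase
        · have h1 : S = T := min_eq_right hcase
          have h2 : min ((n + 1 : ℕ) * (r / 2)) T = T := by
            refine min_eq_right (le_trans hcase ?_)
            push_cast
            nlinarith
          exact ⟨x, by rwa [h2, ← h1]⟩
        · have hST : S ≤ T := min_le_right _ _
          obtain ⟨-, h1le, hnn, -⟩ := invariant ha hκ hx.1 hx.2.1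
          have hSmem : S ∈ Icc 0 S := ⟨hS0, le_refl S⟩
          obtain ⟨hg1, hg2⟩ := growth ha hκ hν hx.1 hx.2.1 S hSmem
          have hexpm : Real.exp (c * S) ≤ Real.exp (c * T) :=
            Real.exp_le_exp.2 (mul_le_mul_of_nonneg_left hST hc.le)
          have hmem : x S ∈ Icc 1 Bd ×ˢ Icc 0 V := by
            have hb1 : (x S).1 ≤ Bd := by
              refine le_trans hg1 ?_
              rw [hBd]
              apply mul_le_mul_of_nonneg_left hexpm
              positivity
            have hb2 : (x S).2 ≤ V := by
              refine le_trans hg2 ?_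
              rw [hV]
              have : (1 + κ / c) * Real.exp (c * S) ≤ Bd := by
                rw [hBd]
                apply mul_le_mul_of_nonneg_left hexpm
                positivity
              nlinarith
            exact ⟨⟨h1le S hSmem, hb1⟩, ⟨hnn S hSmem, hb2⟩⟩
          obtain ⟨y, hyS, hy⟩ := hPL S (x S) hmem
          obtain ⟨z, hzx, hzode⟩ := extend_sol hS0 hr hx.2.1 hyS hy
          refine ⟨z, ?_, ?_, ?_⟩
          · rw [hzx (mem_Iic.2 hS0)]
            exact hx.1
          · intro t ht
            apply hzode
            refine ⟨ht.1, le_trans ht.2 ?_⟩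
            have h3 : min ((n + 1 : ℕ) * (r / 2)) T ≤ (n + 1 : ℕ) * (r / 2) := min_le_left _ _
            have h4 : ((n + 1 : ℕ) : ℝ) * (r / 2) = n * (r / 2) + r / 2 := by push_cast; ring
            have h5 : S + r / 2 = min (n * (r/2)) T + r / 2 := by rw [hS]
            have h6 : min (n * (r/2)) T = n * (r/2) := min_eq_left hcase.le
            rw [h5, h6, ← h4]
            exact min_le_left _ _
          · intro u hu
            rw [hzx (mem_Iic.2 (le_trans hu.2.le hS0))]
            exact hx.2.2 hu
    obtain ⟨n, hn⟩ := exists_nat_ge (T / (r / 2))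
    have hTn : T ≤ n * (r / 2) := by
      rw [div_le_iff₀ (by positivity)] at hn
      linarith
    obtain ⟨x, hx⟩ := claim n
    rw [min_eq_right hTn] at hx
    exact ⟨x, hx⟩
  -- choice and patching
  set X : ℝ → (ℝ → ℝ × ℝ) := fun T => Classical.choose (main (max T 0) (le_max_right _ _))
    with hX
  have hXs : ∀ T : ℝ, Sol (max T 0) (X T) :=
    fun T => Classical.choose_spec (main (max T 0) (le_max_right _ _))
  set g : ℝ → ℝ × ℝ := fun t => X t t with hg
  have hcons : ∀ T₁ T₂ : ℝ, 0 ≤ T₁ → T₁ ≤ T₂ → ∀ u ∈ Ioc (-(ε / 2)) T₁, X T₁ u = X T₂ u := by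
    intro T₁ T₂ hT₁ hT₁₂ u hu
    have hs1 : Sol T₁ (X T₁) := by have := hXs T₁; rwa [max_eq_left hT₁] at this
    have hs2 : Sol T₂ (X T₂) := by
      have := hXs T₂; rwa [max_eq_left (le_trans hT₁ hT₁₂)] at this
    rcases lt_trichotomy u 0 with h | h | h
    · rw [hs1.2.2 ⟨hu.1, h⟩, hs2.2.2 ⟨hu.1, h⟩]
    · subst h
      rw [hs1.1, hs2.1]
    · have hu1 : u ∈ Icc 0 T₁ := ⟨h.le, hu.2⟩
      exact sol_unique ha hκ hν hs1.1 hs2.1 hs1.2.1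
        (fun t ht => hs2.2.1 t ⟨ht.1, le_trans ht.2 hT₁₂⟩) hu1
  have hgX : ∀ t : ℝ, 0 ≤ t → ∀ u ∈ Ioo (-(ε / 2)) (t + 1), g u = X (t + 1) u := by
    intro t ht u hu
    rcases le_or_gt 0 u with h | h
    · show X u u = X (t + 1) u
      have : max u 0 = u := max_eq_left h
      exact hcons u (t + 1) h (by linarith [hu.2]) u ⟨hu.1, le_refl u⟩
    · show X u u = X (t + 1) u
      have hXu : Sol 0 (X u) := by have := hXs u; rwa [max_eq_right h.le] at this
      have hXt : Sol (t + 1) (X (t + 1)) := by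
        have := hXs (t + 1); rwa [max_eq_left (by linarith)] at this
      rw [hXu.2.2 ⟨hu.1, h⟩, hXt.2.2 ⟨hu.1, h⟩]
  have hg0 : g 0 = (1, 0) := by
    show X 0 0 = (1, 0)
    have hs : Sol 0 (X 0) := by have := hXs 0; rwa [max_self] at this
    exact hs.1
  refine ⟨g, hg0, ?_⟩
  intro t ht
  have ht' : (0 : ℝ) ≤ t := ht
  have hs : Sol (t + 1) (X (t + 1)) := by
    have := hXs (t + 1); rwa [max_eq_left (by linarith)] at this
  have hd : HasDerivAt (X (t + 1)) (Fode a κ ν (X (t + 1) t)) t :=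
    hs.2.1 t ⟨ht', by linarith⟩
  have hev : g =ᶠ[𝓝 t] X (t + 1) := by
    apply eventuallyEq_of_mem (Ioo_mem_nhds (by linarith) (by linarith) :
      Ioo (-(ε / 2)) (t + 1) ∈ 𝓝 t)
    exact fun u hu => hgX t ht' u hu
  have hgt : g t = X (t + 1) t := hgX t ht' t ⟨by linarith, by linarith⟩
  rw [hgt]
  exact hd.congr_of_eventuallyEq hev


end Stmt18Aux

/-- The IVP `τ'' = a/τ + κ²/τ³ - 2ν τ'/τ²`, `τ(0) = 1`, `τ'(0) = 0`, with
`a, κ, ν > 0`, has a unique global solution on `[0,∞)`, which is positive,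
has nonnegative derivative, and is nondecreasing. -/
theorem stmt18 (a κ ν : ℝ) (ha : 0 < a) (hκ : 0 < κ) (hν : 0 < ν) :
    ∃ τ τ' : ℝ → ℝ,
      ((∀ t ∈ Set.Ici (0 : ℝ), HasDerivAt τ (τ' t) t) ∧
       (∀ t ∈ Set.Ici (0 : ℝ),
          HasDerivAt τ' (a / τ t + κ ^ 2 / (τ t) ^ 3 - 2 * ν * τ' t / (τ t) ^ 2) t) ∧
       ContinuousOn τ' (Set.Ici 0) ∧
       τ 0 = 1 ∧ τ' 0 = 0 ∧
       (∀ t ∈ Set.Ici (0 : ℝ), 0 < τ t) ∧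
       (∀ t ∈ Set.Ici (0 : ℝ), 0 ≤ τ' t) ∧
       MonotoneOn τ (Set.Ici 0)) ∧
      (∀ ς ς' : ℝ → ℝ,
        (∀ t ∈ Set.Ici (0 : ℝ), HasDerivAt ς (ς' t) t) →
        (∀ t ∈ Set.Ici (0 : ℝ),
          HasDerivAt ς' (a / ς t + κ ^ 2 / (ς t) ^ 3 - 2 * ν * ς' t / (ς t) ^ 2) t) →
        ς 0 = 1 → ς' 0 = 0 → (∀ t ∈ Set.Ici (0 : ℝ), 0 < ς t) →
        ∀ t ∈ Set.Ici (0 : ℝ), ς t = τ t) := by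
  obtain ⟨g, hg0, hgode⟩ := global_sol ha hκ hν
  have hode' : ∀ T : ℝ, ∀ t ∈ Set.Icc (0 : ℝ) T, HasDerivAt g (Fode a κ ν (g t)) t :=
    fun T t ht => hgode t ht.1
  refine ⟨fun t => (g t).1, fun t => (g t).2, ⟨?_, ?_, ?_, ?_, ?_, ?_, ?_, ?_⟩, ?_⟩
  · intro t ht
    simpa [Fode] using hasDerivAt_fst (hgode t ht)
  · intro t ht
    simpa [Fode] using hasDerivAt_snd (hgode t ht)
  · intro t ht
    have := hasDerivAt_snd (hgode t ht)
    exact this.continuousAt.continuousWithinAt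
  · simp [hg0]
  · simp [hg0]
  · intro t ht
    exact (invariant ha hκ hg0 (hode' t)).1 t ⟨ht, le_refl t⟩
  · intro t ht
    exact (invariant ha hκ hg0 (hode' t)).2.2.1 t ⟨ht, le_refl t⟩
  · intro s hs t ht hst
    exact (invariant ha hκ hg0 (hode' t)).2.2.2 ⟨hs, hst⟩ ⟨ht, le_refl t⟩ hst
  · intro ς ς' h1 h2 h30 h40 h5 t ht
    set q : ℝ → ℝ × ℝ := fun s => (ς s, ς' s) with hq
    have hq0 : q 0 = (1, 0) := by simp [hq, h30, h40]
    have hqode : ∀ s ∈ Set.Icc (0 : ℝ) t, HasDerivAt q (Fode a κ ν (q s)) s := by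
      intro s hs
      have := (h1 s hs.1).prodMk (h2 s hs.1)
      simpa [Fode, hq] using this
    have := sol_unique ha hκ hν hq0 hg0 hqode (hode' t) ⟨ht, le_refl t⟩
    have h6 : (q t).1 = (g t).1 := by rw [this]
    simpa [hq] using h6
end
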